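/- For every domain D and n ≥ 2, the power monoid 𝒫_fin(ℕ₀) is isomorphic to a submonoid of the monoid of nonzero ideals of R = D[X₁,…,Xₙ] under ideal multiplication. Concretely, the map sending A = {m₁ < m₂ < … < m_ℓ} ⊆ ℕ₀ to the ideal I_A = ⟨X₁^{m_ℓ−m₁}X₂^{m₁}, X₁^{m_ℓ−m₂}X₂^{m₂}, …, X₁^{m_ℓ−m_{ℓ−1}}X₂^{m_{ℓ−1}}, X₂^{m_ℓ}⟩ is an injective monoid homomorphism: I_{A+B} = I_A · I_B and I_{{0}} = R. -/

import Mathlib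

/-!
`I_A` is generated by the monomials `X₁^(s - m) X₂^m`, `m ∈ A`, all of degree `s = max A`.
Multiplying two generators adds both exponents, and `max (A + B) = max A + max B`, so
`I_A I_B = I_{A+B}`. Conversely, a monomial lies in a monomial ideal iff some generator divides
it. Comparing degrees, the generator of `I_B` belonging to `max B` forces `max A ≤ max B`, so
`I_A = I_B` gives `max A = max B`; between monomials of the same degree, divisibility is
equality, hence `A = B`.
-/

open MvPolynomial
open scoped Pointwise

/-- The ideal `I_A` of `R = D[X₁,…,Xₙ]` associated to a finite set `A ⊆ ℕ₀`:
generated by the monomials `X₁^(max A − m) X₂^m` for `m ∈ A`. -/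
noncomputable def idealOfFinset {D : Type*} [CommRing D] {n : ℕ} (hn : 2 ≤ n)
    (A : Finset ℕ) : Ideal (MvPolynomial (Fin n) D) :=
  Ideal.span {p | ∃ m ∈ A,
    p = (X (⟨0, by omega⟩ : Fin n) : MvPolynomial (Fin n) D) ^ (A.sup id - m)
      * X ⟨1, by omega⟩ ^ m}

namespace MvPolynomial

variable {σ R : Type*} [CommSemiring R]

noncomputable def spanTwoVarMonomials (i j : σ) (s : ℕ) (A : Finset ℕ) :
    Ideal (MvPolynomial σ R) :=
  Ideal.span ((fun m => X i ^ (s - m) * X j ^ m) '' A)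

theorem spanTwoVarMonomials_mul (i j : σ) {s t : ℕ} {A B : Finset ℕ}
    (hA : ∀ a ∈ A, a ≤ s) (hB : ∀ b ∈ B, b ≤ t) :
    spanTwoVarMonomials (R := R) i j s A * spanTwoVarMonomials i j t B =
      spanTwoVarMonomials i j (s + t) (A + B) := by
  unfold spanTwoVarMonomials
  rw [Ideal.span_mul_span', ← Set.image2_mul, Set.image2_image_left, Set.image2_image_right,
    Finset.coe_add, ← Set.image2_add, Set.image_image2]
  congr 1
  refine Set.image2_congr fun a ha b hb => ?_
  rw [show s + t - (a + b) = (s - a) + (t - b) by grind [hA a ha, hB b hb]]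
  ring

theorem X_pow_mul_X_pow_eq_monomial (i j : σ) (a b : ℕ) :
    (X i ^ a * X j ^ b : MvPolynomial σ R) =
      monomial (Finsupp.single i a + Finsupp.single j b) 1 := by
  rw [X_pow_eq_monomial, X_pow_eq_monomial, monomial_mul, one_mul]

theorem exists_le_of_mem_spanTwoVarMonomials [Nontrivial R] {i j : σ} (hij : i ≠ j)
    {s a b : ℕ} {A : Finset ℕ}
    (h : X i ^ a * X j ^ b ∈ spanTwoVarMonomials (R := R) i j s A) :
    ∃ m ∈ A, s - m ≤ a ∧ m ≤ b := by
  classical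
  simp_rw [spanTwoVarMonomials, X_pow_mul_X_pow_eq_monomial] at h
  rw [← Set.image_image (fun e => monomial e (1 : R)), mem_ideal_span_monomial_image] at h
  obtain ⟨_, ⟨m, hm, rfl⟩, hle⟩ := h _ (by
    rw [support_monomial, if_neg one_ne_zero]
    exact Finset.mem_singleton_self _)
  have hi := hle i
  have hj := hle j
  simp only [Finsupp.add_apply, Finsupp.single_eq_same, Finsupp.single_eq_of_ne hij,
    Finsupp.single_eq_of_ne hij.symm, add_zero, zero_add] at hi hj
  exact ⟨m, hm, hi, hj⟩

end MvPolynomial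

theorem Finset.sup_id_add {A B : Finset ℕ} (hA : A.Nonempty) (hB : B.Nonempty) :
    (A + B).sup id = A.sup id + B.sup id := by
  rw [Finset.add_def, Finset.sup_image, Finset.sup_add_sup hA hB]
  rfl

section idealOfFinset

variable {D : Type*} [CommRing D] {n : ℕ} (hn : 2 ≤ n)

theorem idealOfFinset_eq_spanTwoVarMonomials (A : Finset ℕ) :
    idealOfFinset (D := D) hn A =
      spanTwoVarMonomials ⟨0, by omega⟩ ⟨1, by omega⟩ (A.sup id) A := by
  unfold idealOfFinset spanTwoVarMonomials
  congr 1
  ext p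
  simp [eq_comm]

theorem idealOfFinset_add {A B : Finset ℕ} (hA : A.Nonempty) (hB : B.Nonempty) :
    idealOfFinset (D := D) hn (A + B) = idealOfFinset hn A * idealOfFinset hn B := by
  simp only [idealOfFinset_eq_spanTwoVarMonomials, Finset.sup_id_add hA hB]
  exact (spanTwoVarMonomials_mul _ _ (fun a => Finset.le_sup (f := id))
    (fun b => Finset.le_sup (f := id))).symm

theorem idealOfFinset_singleton_zero : idealOfFinset (D := D) hn {0} = ⊤ :=
  (Ideal.eq_top_iff_one _).mpr <| Ideal.subset_span ⟨0, Finset.mem_singleton_self 0, by simp⟩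

variable [Nontrivial D]

theorem exists_le_of_idealOfFinset_le {A B : Finset ℕ}
    (h : idealOfFinset (D := D) hn B ≤ idealOfFinset hn A) {b : ℕ} (hb : b ∈ B) :
    ∃ m ∈ A, A.sup id - m ≤ B.sup id - b ∧ m ≤ b := by
  have hgen := h (Ideal.subset_span ⟨b, hb, rfl⟩)
  rw [idealOfFinset_eq_spanTwoVarMonomials] at hgen
  exact exists_le_of_mem_spanTwoVarMonomials (by simp [Fin.ext_iff]) hgen

theorem sup_le_of_idealOfFinset_le {A B : Finset ℕ} (hB : B.Nonempty)
    (h : idealOfFinset (D := D) hn B ≤ idealOfFinset hn A) : A.sup id ≤ B.sup id := by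
  obtain ⟨b, hb, hsup⟩ := B.exists_mem_eq_sup hB id
  obtain ⟨m, hm, hdeg, hmb⟩ := exists_le_of_idealOfFinset_le hn h hb
  have hmA : m ≤ A.sup id := Finset.le_sup (f := id) hm
  simp only [id] at hsup
  omega

theorem subset_of_idealOfFinset_le {A B : Finset ℕ}
    (h : idealOfFinset (D := D) hn B ≤ idealOfFinset hn A) (hsup : A.sup id = B.sup id) :
    B ⊆ A := by
  intro b hb
  obtain ⟨m, hm, hdeg, hmb⟩ := exists_le_of_idealOfFinset_le hn h hb
  have hmA : m ≤ A.sup id := Finset.le_sup (f := id) hm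
  have hbB : b ≤ B.sup id := Finset.le_sup (f := id) hb
  obtain rfl : m = b := by omega
  exact hm

theorem idealOfFinset_injOn : Set.InjOn (idealOfFinset (D := D) hn) {A | A.Nonempty} := by
  intro A hA B hB h
  have hsup := le_antisymm (sup_le_of_idealOfFinset_le hn hB h.ge)
    (sup_le_of_idealOfFinset_le hn hA h.le)
  exact (subset_of_idealOfFinset_le hn h.le hsup.symm).antisymm
    (subset_of_idealOfFinset_le hn h.ge hsup)

end idealOfFinset

/-- The power monoid `𝒫_fin(ℕ₀)` embeds into the monoid of nonzero ideals of
`R = D[X₁,…,Xₙ]` (`n ≥ 2`): the map `A ↦ I_A` sends sumsets to ideal products, sends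
`{0}` to the unit ideal, and is injective on finite nonempty subsets of `ℕ₀`. -/
theorem powerMonoid_embeds {D : Type*} [CommRing D] [IsDomain D] {n : ℕ} (hn : 2 ≤ n) :
    (∀ A B : Finset ℕ, A.Nonempty → B.Nonempty →
      idealOfFinset (D := D) hn (A + B) = idealOfFinset (D := D) hn A * idealOfFinset (D := D) hn B) ∧
    (idealOfFinset (D := D) hn {0} = ⊤) ∧
    (∀ A B : Finset ℕ, A.Nonempty → B.Nonempty →
      idealOfFinset (D := D) hn A = idealOfFinset (D := D) hn B → A = B) :=
  ⟨fun _ _ hA hB => idealOfFinset_add hn hA hB, idealOfFinset_singleton_zero hn,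
    fun _ _ hA hB h => idealOfFinset_injOn hn hA hB h⟩
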